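/- arXiv:1904.10532 — 3 statements merged into one kernel-verified Lean document; each statement's English description precedes it below -/
import Mathlib

section
/- Let a = c₁ + c₂j be a nonzero lightlike split quaternion (c₁, c₂ ∈ ℂ, c₁ ≠ 0) and d ∈ ℍₛ. Then the equation a x = d has a solution x ∈ ℍₛ if and only if (1/2)(1 + (c₂/c̄₁) j) · d = d; and in that case the set of all solutions is exactly { ((c̄₁ + c₂j)/(4|c₁|²)) · d + (1/2)(1 − (c₂/c₁) j) · y : y ∈ ℍₛ }. -/
open Quaternion

/-- The split quaternions: `ℍ[ℝ, -1, 1]`. -/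
abbrev SplitQuaternion : Type := ℍ[ℝ, -1, 1]

/-- The imaginary unit `j` of the split quaternions. -/
def qj : SplitQuaternion := ⟨0, 0, 1, 0⟩

/-- The embedding `ℂ = ℝ + ℝi ⊂ ℍₛ`. -/
def toQ (z : ℂ) : SplitQuaternion := ⟨z.re, z.im, 0, 0⟩

/-!
With `b = c̄₁ + c₂j`, the lightlike condition `|c₁| = |c₂|` gives `a b a = 4|c₁|² a`, so
`s = b / (4|c₁|²)` is an inner inverse of `a`: `a s a = a`. For any inner inverse, `a x = d` is
solvable iff `a s d = d`, and then its solutions are `s d + (1 - s a) y`. Computing `a s` and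
`1 - s a` in the form `z + wj` gives the idempotents of the statement.
-/

open ComplexConjugate

section InnerInverse

variable {R : Type*} [Ring R] {a s : R}

theorem exists_mul_eq_iff_of_mul_mul_eq_self (h : a * s * a = a) (d : R) :
    (∃ x, a * x = d) ↔ a * s * d = d := by
  constructor
  · rintro ⟨x, rfl⟩
    rw [← mul_assoc, h]
  · intro hd
    exact ⟨s * d, by rw [← mul_assoc, hd]⟩

theorem setOf_mul_eq_of_mul_mul_eq_self (h : a * s * a = a) {d : R} (hd : a * s * d = d) :
    {x | a * x = d} = {x | ∃ y, x = s * d + (1 - s * a) * y} := by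
  ext x
  constructor
  · rintro rfl
    exact ⟨x, by noncomm_ring⟩
  · rintro ⟨y, rfl⟩
    have hker : a * (1 - s * a) = 0 := by rw [mul_sub, mul_one, ← mul_assoc, h, sub_self]
    show a * (s * d + (1 - s * a) * y) = d
    rw [mul_add, ← mul_assoc, ← mul_assoc, hd, hker, zero_mul, add_zero]

end InnerInverse

theorem toQ_one : toQ 1 = 1 := by
  ext <;> simp [toQ]

theorem toQ_add_toQ_mul_qj_mul (z w u v : ℂ) :
    (toQ z + toQ w * qj) * (toQ u + toQ v * qj) =
      toQ (z * u + w * conj v) + toQ (z * v + w * conj u) * qj := by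
  ext <;> simp [toQ, qj] <;> ring

theorem smul_toQ_add_toQ_mul_qj (r : ℝ) (z w : ℂ) :
    r • (toQ z + toQ w * qj) = toQ (r * z) + toQ (r * w) * qj := by
  ext <;> simp [toQ, qj]

theorem toQ_add_toQ_mul_qj_inj {z w u v : ℂ} :
    toQ z + toQ w * qj = toQ u + toQ v * qj ↔ z = u ∧ w = v := by
  simp [QuaternionAlgebra.ext_iff, Complex.ext_iff, toQ, qj, and_assoc]

section Lightlike

variable {c₁ c₂ : ℂ}

theorem lightlike_mul_mul_self (hla : ‖c₁‖ = ‖c₂‖) :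
    (toQ c₁ + toQ c₂ * qj) * (toQ (conj c₁) + toQ c₂ * qj) * (toQ c₁ + toQ c₂ * qj) =
      (4 * ‖c₁‖ ^ 2 : ℝ) • (toQ c₁ + toQ c₂ * qj) := by
  have h₁ := Complex.mul_conj' c₁
  have h₂ : c₂ * conj c₂ = (‖c₁‖ : ℂ) ^ 2 := by rw [hla, Complex.mul_conj']
  rw [toQ_add_toQ_mul_qj_mul, toQ_add_toQ_mul_qj_mul, smul_toQ_add_toQ_mul_qj,
    toQ_add_toQ_mul_qj_inj, Complex.conj_conj]
  push_cast
  constructor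
  · linear_combination c₁ * h₁ + 3 * c₁ * h₂
  · linear_combination 3 * c₂ * h₁ + c₂ * h₂

theorem lightlike_mul_smul (hc : c₁ ≠ 0) (hla : ‖c₁‖ = ‖c₂‖) :
    (toQ c₁ + toQ c₂ * qj) * ((4 * ‖c₁‖ ^ 2 : ℝ)⁻¹ • (toQ (conj c₁) + toQ c₂ * qj)) =
      (1 / 2 : ℝ) • (1 + toQ (c₂ / conj c₁) * qj) := by
  have h₁ := Complex.mul_conj' c₁
  have h₂ : c₂ * conj c₂ = (‖c₁‖ : ℂ) ^ 2 := by rw [hla, Complex.mul_conj']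
  have hn : (‖c₁‖ : ℂ) ≠ 0 := by simpa using hc
  have hc' : conj c₁ ≠ 0 := by simpa using hc
  rw [mul_smul_comm, toQ_add_toQ_mul_qj_mul, smul_toQ_add_toQ_mul_qj, ← toQ_one,
    smul_toQ_add_toQ_mul_qj, toQ_add_toQ_mul_qj_inj, Complex.conj_conj]
  push_cast
  constructor
  · field_simp
    linear_combination 2 * h₁ + 2 * h₂
  · field_simp
    linear_combination 4 * c₂ * h₁

theorem smul_mul_lightlike (hc : c₁ ≠ 0) (hla : ‖c₁‖ = ‖c₂‖) :
    ((4 * ‖c₁‖ ^ 2 : ℝ)⁻¹ • (toQ (conj c₁) + toQ c₂ * qj)) * (toQ c₁ + toQ c₂ * qj) =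
      (1 / 2 : ℝ) • (1 + toQ (c₂ / c₁) * qj) := by
  have h₁ := Complex.mul_conj' c₁
  have h₂ : c₂ * conj c₂ = (‖c₁‖ : ℂ) ^ 2 := by rw [hla, Complex.mul_conj']
  have hn : (‖c₁‖ : ℂ) ≠ 0 := by simpa using hc
  rw [smul_mul_assoc, toQ_add_toQ_mul_qj_mul, smul_toQ_add_toQ_mul_qj, ← toQ_one,
    smul_toQ_add_toQ_mul_qj, toQ_add_toQ_mul_qj_inj]
  push_cast
  constructor
  · field_simp
    linear_combination 2 * h₁ + 2 * h₂
  · field_simp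
    linear_combination 4 * c₂ * h₁

end Lightlike

/-- For a nonzero lightlike split quaternion `a = c₁ + c₂j`, the equation `a x = d` is
solvable iff `(1/2)(1 + (c₂/c̄₁)j) d = d`, in which case the solutions are exactly
`x = ((c̄₁ + c₂j)/(4|c₁|²)) d + (1/2)(1 − (c₂/c₁)j) y`, `y ∈ ℍₛ`. -/
theorem ax_eq_d_solvable (c₁ c₂ : ℂ) (hc : c₁ ≠ 0)
    (hla : ‖c₁‖ = ‖c₂‖)
    (a d : SplitQuaternion) (ha : a = toQ c₁ + toQ c₂ * qj) :
    ((∃ x : SplitQuaternion, a * x = d) ↔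
        (1 / 2 : ℝ) • ((1 + toQ (c₂ / starRingEnd ℂ c₁) * qj) * d) = d) ∧
      ((1 / 2 : ℝ) • ((1 + toQ (c₂ / starRingEnd ℂ c₁) * qj) * d) = d →
        {x : SplitQuaternion | a * x = d} =
          {x : SplitQuaternion | ∃ y : SplitQuaternion,
            x = ((4 * ‖c₁‖ ^ 2)⁻¹ : ℝ) •
                  ((toQ (starRingEnd ℂ c₁) + toQ c₂ * qj) * d) +
                (1 / 2 : ℝ) • ((1 - toQ (c₂ / c₁) * qj) * y)}) := by
  set s : SplitQuaternion := ((4 * ‖c₁‖ ^ 2)⁻¹ : ℝ) • (toQ (conj c₁) + toQ c₂ * qj)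
  have hs : a * s * a = a := by
    rw [ha, mul_smul_comm, smul_mul_assoc, lightlike_mul_mul_self hla, smul_smul,
      inv_mul_cancel₀ (by positivity), one_smul]
  have has : a * s = (1 / 2 : ℝ) • (1 + toQ (c₂ / conj c₁) * qj) :=
    ha ▸ lightlike_mul_smul hc hla
  have hsa : 1 - s * a = (1 / 2 : ℝ) • (1 - toQ (c₂ / c₁) * qj) := by
    rw [ha, smul_mul_lightlike hc hla]
    module
  simp only [← smul_mul_assoc, ← has, ← hsa]
  exact ⟨exists_mul_eq_iff_of_mul_mul_eq_self hs d, setOf_mul_eq_of_mul_mul_eq_self hs⟩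
end

section
/- Let a = a₀ + a₁i + a₂j + a₃k and b = b₀ + b₁i + b₂j + b₃k be split quaternions that are not real (Im a ≠ 0 and Im b ≠ 0), and let T(a,b) = R(a) − L(b). (1) If a₀ = b₀ and K(a) = K(b), then rank T(a,b) = 2. (2) If a₀ ≠ b₀ and det T(a,b) = 0, then K(a) ≥ 0, K(b) ≥ 0, and rank T(a,b) = 3. -/
/-!
Write `α = a₀ - b₀` and `A, B` for the imaginary parts of `a, b`. Then
`T(a,b) = α + R(A) - L(B)`, where `R(A)` and `L(B)` commute and square to the scalars `K(a)` and
`K(b)`; this gives `det T(a,b) = (α² - K(a) - K(b))² - 4 K(a) K(b)`, whence the signs of `K(a)`,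
`K(b)` when `α ≠ 0`.

If `α = 0` and `K(a) = K(b)`, then `T(a,b) (R(A) + L(B)) = R(A)² - L(B)² = 0`, so the ranks of
`T(a,b)` and of `R(A) + L(B) = T(A, -B)` add up to at most `4`; each is at least `2`, because the
principal `2 × 2` minors of `T(a,b)` are `±(aₖ ± bₖ)²`.

If `α ≠ 0` and `det T(a,b) = 0`, the rank is at most `3`. Were all `3 × 3` minors zero, then
`α² = K(a) + K(b)` (trace of the adjugate), so `K(a) K(b) = 0`, and `K(a) B = K(b) A`; since one of
`K(a), K(b)` is then `α² ≠ 0`, this forces `A = 0` or `B = 0`.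
-/

open Quaternion Matrix

/-- `K(q) = (Im q)² = −q₁² + q₂² + q₃²`, as a real scalar. -/
def Kq (q : SplitQuaternion) : ℝ := -q.imI ^ 2 + q.imJ ^ 2 + q.imK ^ 2

/-- The matrix of left multiplication by `a` on `ℍₛ` in the basis `(1, i, j, k)`. -/
def Lm (a : SplitQuaternion) : Matrix (Fin 4) (Fin 4) ℝ :=
  !![a.re, -a.imI, a.imJ, a.imK;
     a.imI, a.re, a.imK, -a.imJ;
     a.imJ, a.imK, a.re, -a.imI;
     a.imK, -a.imJ, a.imI, a.re]

/-- The matrix of right multiplication by `a` on `ℍₛ` in the basis `(1, i, j, k)`. -/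
def Rm (a : SplitQuaternion) : Matrix (Fin 4) (Fin 4) ℝ :=
  !![a.re, -a.imI, a.imJ, a.imK;
     a.imI, a.re, -a.imK, a.imJ;
     a.imJ, -a.imK, a.re, a.imI;
     a.imK, a.imJ, -a.imI, a.re]

namespace Matrix

variable {m n R : Type*}

theorem det_submatrix_eq_zero_of_rank_lt [Fintype n] [CommRing R] [IsDomain R]
    {A : Matrix m n R} {r : ℕ} (h : A.rank < r) (f : Fin r → m) (g : Fin r → n) :
    (A.submatrix f g).det = 0 := by
  by_contra hdet
  have := (A.submatrix f g).rank_of_det_ne_zero hdet ▸ A.rank_submatrix_le f g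
  simp only [Fintype.card_fin] at this
  omega

theorem rank_lt_card_of_det_eq_zero [Fintype n] [DecidableEq n] [Field R] {A : Matrix n n R}
    (h : A.det = 0) : A.rank < Fintype.card n := by
  refine lt_of_le_of_ne A.rank_le_card_width fun hrank => ?_
  have hcols : LinearIndependent R A.col := by
    rw [linearIndependent_iff_card_eq_finrank_span, Set.finrank, ← rank_eq_finrank_span_cols, hrank]
  rw [linearIndependent_cols_iff_isUnit, isUnit_iff_isUnit_det, h] at hcols
  exact not_isUnit_zero hcols

end Matrix

theorem nonneg_of_sq_sub_sub_eq_four_mul {t y z : ℝ} (h : (t - y - z) ^ 2 = 4 * y * z)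
    (ht : 0 < t) : 0 ≤ y := by
  have : (t + y - z) ^ 2 = 4 * t * y := by linear_combination h
  nlinarith [sq_nonneg (t + y - z)]

theorem det_Rm_sub_Lm (a b : SplitQuaternion) :
    (Rm a - Lm b).det = ((a.re - b.re) ^ 2 - Kq a - Kq b) ^ 2 - 4 * Kq a * Kq b := by
  rw [det_succ_row_zero]
  simp only [Fin.sum_univ_four, det_fin_three, submatrix_apply, Matrix.sub_apply, Rm, Lm, Kq,
    of_apply, cons_val, Fin.succ_zero_eq_one, Fin.succ_one_eq_two, Fin.reduceSucc, Fin.succAbove,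
    Fin.reduceCastSucc, Fin.reduceLT, if_true, if_false, Fin.isValue, Fin.coe_ofNat_eq_mod]
  ring

theorem Rm_sub_Lm_mul_Rm_im_sub_Lm_neg_im (a b : SplitQuaternion) :
    (Rm a - Lm b) * (Rm a.im - Lm (-b.im)) =
      (a.re - b.re) • (Rm a.im - Lm (-b.im)) + (Kq a - Kq b) • 1 := by
  ext i j
  fin_cases i <;> fin_cases j <;>
    simp only [mul_apply, Fin.sum_univ_four, Matrix.add_apply, Matrix.sub_apply, Matrix.smul_apply,
      one_apply, Rm, Lm, Kq, of_apply, cons_val, QuaternionAlgebra.re_im, QuaternionAlgebra.imI_im,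
      QuaternionAlgebra.imJ_im, QuaternionAlgebra.imK_im, QuaternionAlgebra.re_neg,
      QuaternionAlgebra.imI_neg, QuaternionAlgebra.imJ_neg, QuaternionAlgebra.imK_neg, smul_eq_mul,
      Fin.reduceEq, Fin.reduceFinMk, Fin.isValue, if_true, if_false] <;>
    ring

theorem two_le_rank_Rm_sub_Lm {a b : SplitQuaternion} (ha : a.im ≠ 0) (hre : a.re = b.re) :
    2 ≤ (Rm a - Lm b).rank := by
  by_contra! h
  have minor (r : Fin 2 → Fin 4) := det_submatrix_eq_zero_of_rank_lt h r r
  have m01 := minor ![0, 1]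
  have m02 := minor ![0, 2]
  have m03 := minor ![0, 3]
  have m12 := minor ![1, 2]
  have m13 := minor ![1, 3]
  have m23 := minor ![2, 3]
  simp only [det_fin_two, submatrix_apply, Matrix.sub_apply, Rm, Lm, of_apply, cons_val]
    at m01 m02 m03 m12 m13 m23
  have hsq : a.imI ^ 2 + a.imJ ^ 2 + a.imK ^ 2 + b.imI ^ 2 + b.imJ ^ 2 + b.imK ^ 2 = 0 := by
    linear_combination (m01 - m02 - m03 - m12 - m13 + m23) / 2 + (a.re - b.re) * hre
  apply ha
  ext <;> simp only [QuaternionAlgebra.re_im, QuaternionAlgebra.imI_im, QuaternionAlgebra.imJ_im,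
    QuaternionAlgebra.imK_im, QuaternionAlgebra.re_zero, QuaternionAlgebra.imI_zero,
    QuaternionAlgebra.imJ_zero, QuaternionAlgebra.imK_zero] <;>
    nlinarith [sq_nonneg a.imI, sq_nonneg a.imJ, sq_nonneg a.imK,
      sq_nonneg b.imI, sq_nonneg b.imJ, sq_nonneg b.imK]

theorem three_le_rank_Rm_sub_Lm {a b : SplitQuaternion} (ha : a.im ≠ 0) (hb : b.im ≠ 0)
    (hre : a.re ≠ b.re) (hdet : (Rm a - Lm b).det = 0) : 3 ≤ (Rm a - Lm b).rank := by
  by_contra! h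
  have minor (r c : Fin 3 → Fin 4) := det_submatrix_eq_zero_of_rank_lt h r c
  have m00 := minor ![1, 2, 3] ![1, 2, 3]
  have m11 := minor ![0, 2, 3] ![0, 2, 3]
  have m22 := minor ![0, 1, 3] ![0, 1, 3]
  have m33 := minor ![0, 1, 2] ![0, 1, 2]
  have m01 := minor ![1, 2, 3] ![0, 2, 3]
  have m10 := minor ![0, 2, 3] ![1, 2, 3]
  have m02 := minor ![1, 2, 3] ![0, 1, 3]
  have m20 := minor ![0, 1, 3] ![1, 2, 3]
  have m03 := minor ![1, 2, 3] ![0, 1, 2]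
  have m30 := minor ![0, 1, 2] ![1, 2, 3]
  simp only [det_fin_three, submatrix_apply, Matrix.sub_apply, Rm, Lm, of_apply, cons_val]
    at m00 m11 m22 m33 m01 m10 m02 m20 m03 m30
  rw [det_Rm_sub_Lm] at hdet
  have hα : a.re - b.re ≠ 0 := sub_ne_zero.mpr hre
  have hs : (a.re - b.re) ^ 2 - Kq a - Kq b = 0 := by
    refine (mul_eq_zero.mp ?_).resolve_left hα
    unfold Kq
    linear_combination (m00 + m11 + m22 + m33) / 4
  have hKK : Kq a * Kq b = 0 := by
    linear_combination (hs * ((a.re - b.re) ^ 2 - Kq a - Kq b) - hdet) / 4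
  have hK : Kq a • b.im = Kq b • a.im := by
    unfold Kq at hs ⊢
    ext <;> simp only [QuaternionAlgebra.re_smul, QuaternionAlgebra.imI_smul,
      QuaternionAlgebra.imJ_smul, QuaternionAlgebra.imK_smul, QuaternionAlgebra.re_im,
      QuaternionAlgebra.imI_im, QuaternionAlgebra.imJ_im, QuaternionAlgebra.imK_im, smul_eq_mul,
      mul_zero]
    · linear_combination (m10 - m01) / 4 + (a.imI - b.imI) / 2 * hs
    · linear_combination (m20 + m02) / 4 + (a.imJ - b.imJ) / 2 * hs
    · linear_combination -(m30 + m03) / 4 + (a.imK - b.imK) / 2 * hs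
  have hα2 : (a.re - b.re) ^ 2 ≠ 0 := pow_ne_zero 2 hα
  rcases mul_eq_zero.mp hKK with hKa | hKb
  · have hKb : Kq b = (a.re - b.re) ^ 2 := by linear_combination -hs - hKa
    rw [hKa, hKb, zero_smul, eq_comm, smul_eq_zero] at hK
    exact ha (hK.resolve_left hα2)
  · have hKa : Kq a = (a.re - b.re) ^ 2 := by linear_combination -hs - hKb
    rw [hKa, hKb, zero_smul, smul_eq_zero] at hK
    exact hb (hK.resolve_left hα2)

/-- For non-real split quaternions `a, b`, with `T(a,b) = R(a) − L(b)`: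
(1) if `a₀ = b₀` and `K(a) = K(b)` then `rank T(a,b) = 2`;
(2) if `a₀ ≠ b₀` and `det T(a,b) = 0` then `K(a) ≥ 0`, `K(b) ≥ 0` and
`rank T(a,b) = 3`. -/
theorem rank_Rm_sub_Lm (a b : SplitQuaternion) (ha : a.im ≠ 0) (hb : b.im ≠ 0) :
    ((a.re = b.re ∧ Kq a = Kq b) → (Rm a - Lm b).rank = 2) ∧
      ((a.re ≠ b.re ∧ (Rm a - Lm b).det = 0) →
        0 ≤ Kq a ∧ 0 ≤ Kq b ∧ (Rm a - Lm b).rank = 3) := by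
  refine ⟨fun ⟨hre, hK⟩ => ?_, fun ⟨hre, hdet⟩ => ?_⟩
  · have hmul : (Rm a - Lm b) * (Rm a.im - Lm (-b.im)) = 0 := by
      rw [Rm_sub_Lm_mul_Rm_im_sub_Lm_neg_im, hre, hK]
      simp
    have hsum := rank_add_rank_le_card_of_mul_eq_zero hmul
    have h₁ := two_le_rank_Rm_sub_Lm ha hre
    have h₂ := two_le_rank_Rm_sub_Lm (a := a.im) (b := -b.im) (by simpa using ha) (by simp)
    rw [Fintype.card_fin] at hsum
    omega
  · have hα : 0 < (a.re - b.re) ^ 2 := sq_pos_iff.mpr (sub_ne_zero.mpr hre)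
    have hdisc := det_Rm_sub_Lm a b ▸ hdet
    refine ⟨nonneg_of_sq_sub_sub_eq_four_mul (z := Kq b) (by linear_combination hdisc) hα,
      nonneg_of_sq_sub_sub_eq_four_mul (z := Kq a) (by linear_combination hdisc) hα, ?_⟩
    have hlt := rank_lt_card_of_det_eq_zero hdet
    rw [Fintype.card_fin] at hlt
    exact le_antisymm (Nat.le_of_lt_succ hlt) (three_le_rank_Rm_sub_Lm ha hb hre hdet)
end

section
/- Let a, b ∈ ℍₛ be non-real split quaternions with a₀ = b₀ and K(a) = K(b). Let T = R(a) − L(b), S = R(a') − L(b'), and c = 2(|Im a|² + |Im b|²) > 0. Then T S T = c·T, S T S = c·S, and both T S and S T are symmetric matrices (equivalently, the matrix S/c satisfies the four Penrose equations for T, i.e. T⁺ = (R(a') − L(b')) / (2(|Im a|² + |Im b|²))). -/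
open Quaternion Matrix

/-- The 'prime' of `q`: `q' = q₀ − q₁i + q₂j + q₃k`. -/
def prime (q : SplitQuaternion) : SplitQuaternion := ⟨q.re, -q.imI, q.imJ, q.imK⟩

/-- `|Im q|² = q₁² + q₂² + q₃²`. -/
def normIm (q : SplitQuaternion) : ℝ := q.imI ^ 2 + q.imJ ^ 2 + q.imK ^ 2

/-!
Since `a₀ = b₀`, the real parts cancel and `T x = x u - v x` with `u = Im a`, `v = Im b`.
Transposition corresponds to `q ↦ q'` (the standard inner product is `Re (x y')`), so `S = Tᵀ`.
For imaginary `u` one has `u² = K(u)` and `u u' + u' u = 2|Im u|²`, and left and right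
multiplications commute. Expanding `(R u - L v)(R u' - L v')(R u - L v)` with these relations,
the `K`-terms cancel because `K(u) = K(v)`, leaving `2(|Im u|² + |Im v|²)(R u - L v)`; the other
Penrose equations follow by transposing.
-/
theorem sub_mul_sub_mul_sub_eq_smul {R A : Type*} [CommRing R] [Ring A] [Algebra R A]
    {U U' V V' : A} {κ p q : R}
    (hU : U * U = algebraMap R A κ) (hV : V * V = algebraMap R A κ)
    (hUU' : U * U' + U' * U = algebraMap R A p) (hVV' : V * V' + V' * V = algebraMap R A q)
    (hUV : Commute U V) (hUV' : Commute U V') (hU'V : Commute U' V) :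
    (U - V) * (U' - V') * (U - V) = (p + q) • (U - V) := by
  have hUV'U : U * V' * U = algebraMap R A κ * V' := by
    rw [mul_assoc, ← hUV'.eq, ← mul_assoc, hU]
  have hVU'V : V * U' * V = algebraMap R A κ * U' := by
    rw [mul_assoc, hU'V.eq, ← mul_assoc, hV]
  have hUU'V : U * U' * V + V * U' * U = algebraMap R A p * V := by
    rw [mul_assoc V, ← (hU'V.mul_left hUV).eq, ← add_mul, hUU']
  have hUV'V : U * V' * V + V * V' * U = algebraMap R A q * U := by
    rw [mul_assoc V, ← hUV'.eq, ← mul_assoc, ← hUV.eq, mul_assoc, mul_assoc, ← mul_add,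
      add_comm, hVV', Algebra.commutes]
  have hUU'U : U * U' * U = algebraMap R A p * U - algebraMap R A κ * U' := by
    rw [Algebra.commutes κ, ← hUU', ← hU]
    noncomm_ring
  have hVV'V : V * V' * V = algebraMap R A q * V - algebraMap R A κ * V' := by
    rw [Algebra.commutes κ, ← hVV', ← hV]
    noncomm_ring
  calc (U - V) * (U' - V') * (U - V)
      = U * U' * U - (U * U' * V + V * U' * U) - U * V' * U + (U * V' * V + V * V' * U)
          + V * U' * V - V * V' * V := by noncomm_ring
    _ = (p + q) • (U - V) := by
      rw [hUV'U, hVU'V, hUU'V, hUV'V, hUU'U, hVV'V, add_smul, Algebra.smul_def, Algebra.smul_def]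
      noncomm_ring

namespace SplitQuaternion

theorem normIm_nonneg (q : SplitQuaternion) : 0 ≤ normIm q := by
  unfold normIm
  positivity

theorem normIm_pos {q : SplitQuaternion} (hq : q.im ≠ 0) : 0 < normIm q := by
  refine (normIm_nonneg q).lt_of_ne fun h => hq ?_
  have hI : q.imI = 0 := by unfold normIm at h; nlinarith [sq_nonneg q.imJ, sq_nonneg q.imK]
  have hJ : q.imJ = 0 := by unfold normIm at h; nlinarith [sq_nonneg q.imI, sq_nonneg q.imK]
  have hK : q.imK = 0 := by unfold normIm at h; nlinarith [sq_nonneg q.imI, sq_nonneg q.imJ]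
  ext <;> simp [hI, hJ, hK]

theorem im_mul_self (q : SplitQuaternion) :
    q.im * q.im = algebraMap ℝ _ (-q.imI ^ 2 + q.imJ ^ 2 + q.imK ^ 2) := by
  ext <;> simp [QuaternionAlgebra.algebraMap_eq] <;> ring

theorem im_mul_prime_add_prime_mul (q : SplitQuaternion) :
    q.im * prime q.im + prime q.im * q.im = algebraMap ℝ _ (2 * normIm q) := by
  ext <;> simp [QuaternionAlgebra.algebraMap_eq, prime, normIm] <;> ring

end SplitQuaternion

open SplitQuaternion

theorem Lm_eq_leftMulMatrix (a : SplitQuaternion) :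
    Lm a = Algebra.leftMulMatrix (QuaternionAlgebra.basisOneIJK (-1 : ℝ) 0 1) a := by
  ext i j
  fin_cases i <;> fin_cases j <;>
    simp [Lm, QuaternionAlgebra.basisOneIJK, Module.Basis.coe_ofEquivFun,
      Algebra.leftMulMatrix_apply, LinearMap.toMatrix_apply]

theorem Rm_eq_toMatrixAlgEquiv_mulRight (a : SplitQuaternion) :
    Rm a = LinearMap.toMatrixAlgEquiv (QuaternionAlgebra.basisOneIJK (-1 : ℝ) 0 1)
      (LinearMap.mulRight ℝ a) := by
  ext i j
  fin_cases i <;> fin_cases j <;>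
    simp [Rm, QuaternionAlgebra.basisOneIJK, Module.Basis.coe_ofEquivFun,
      LinearMap.toMatrixAlgEquiv_apply]

theorem Lm_mul (p q : SplitQuaternion) : Lm (p * q) = Lm p * Lm q := by
  simp only [Lm_eq_leftMulMatrix, map_mul]

theorem Lm_add (p q : SplitQuaternion) : Lm (p + q) = Lm p + Lm q := by
  simp only [Lm_eq_leftMulMatrix, map_add]

theorem Lm_algebraMap (r : ℝ) : Lm (algebraMap ℝ _ r) = algebraMap ℝ _ r := by
  rw [Lm_eq_leftMulMatrix, AlgHom.commutes]

theorem Rm_mul (p q : SplitQuaternion) : Rm (p * q) = Rm q * Rm p := by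
  rw [Rm_eq_toMatrixAlgEquiv_mulRight, LinearMap.mulRight_mul, ← Module.End.mul_eq_comp,
    map_mul, ← Rm_eq_toMatrixAlgEquiv_mulRight, ← Rm_eq_toMatrixAlgEquiv_mulRight]

theorem Rm_add (p q : SplitQuaternion) : Rm (p + q) = Rm p + Rm q := by
  rw [Rm_eq_toMatrixAlgEquiv_mulRight, Rm_eq_toMatrixAlgEquiv_mulRight,
    Rm_eq_toMatrixAlgEquiv_mulRight, ← map_add]
  congr 1
  exact LinearMap.ext fun x => mul_add x p q

theorem Rm_algebraMap (r : ℝ) : Rm (algebraMap ℝ _ r) = algebraMap ℝ _ r := by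
  have hmul : LinearMap.mulRight ℝ (algebraMap ℝ SplitQuaternion r) = algebraMap ℝ _ r :=
    LinearMap.ext fun x => ((Algebra.smul_def r x).trans (Algebra.commutes r x)).symm
  rw [Rm_eq_toMatrixAlgEquiv_mulRight, hmul, AlgEquiv.commutes]

theorem commute_Rm_Lm (p q : SplitQuaternion) : Commute (Rm p) (Lm q) := by
  rw [Rm_eq_toMatrixAlgEquiv_mulRight, Lm_eq_leftMulMatrix, Algebra.leftMulMatrix_apply]
  exact ((LinearMap.commute_mulLeft_right (R := ℝ) q p).symm).map _

theorem transpose_Lm (q : SplitQuaternion) : (Lm q)ᵀ = Lm (prime q) := by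
  ext i j
  fin_cases i <;> fin_cases j <;> simp [Lm, prime]

theorem transpose_Rm (q : SplitQuaternion) : (Rm q)ᵀ = Rm (prime q) := by
  ext i j
  fin_cases i <;> fin_cases j <;> simp [Rm, prime]

theorem Rm_sub_Lm_eq_Rm_im_sub_Lm_im {a b : SplitQuaternion} (hre : a.re = b.re) :
    Rm a - Lm b = Rm a.im - Lm b.im := by
  conv_lhs => rw [← QuaternionAlgebra.re_add_im a, ← QuaternionAlgebra.re_add_im b]
  rw [← QuaternionAlgebra.coe_algebraMap, Rm_add, Lm_add, Rm_algebraMap, Lm_algebraMap, hre]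
  abel

theorem Rm_sub_Lm_mul_transpose_mul_self {a b : SplitQuaternion} (hre : a.re = b.re)
    (hK : -a.imI ^ 2 + a.imJ ^ 2 + a.imK ^ 2 = -b.imI ^ 2 + b.imJ ^ 2 + b.imK ^ 2) :
    (Rm a - Lm b) * (Rm a - Lm b)ᵀ * (Rm a - Lm b) =
      (2 * (normIm a + normIm b)) • (Rm a - Lm b) := by
  rw [Rm_sub_Lm_eq_Rm_im_sub_Lm_im hre, transpose_sub, transpose_Rm, transpose_Lm, mul_add]
  refine sub_mul_sub_mul_sub_eq_smul (κ := -a.imI ^ 2 + a.imJ ^ 2 + a.imK ^ 2)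
    ?_ ?_ ?_ ?_ (commute_Rm_Lm _ _) (commute_Rm_Lm _ _) (commute_Rm_Lm _ _)
  · rw [← Rm_mul, im_mul_self, Rm_algebraMap]
  · rw [← Lm_mul, im_mul_self, Lm_algebraMap, hK]
  · rw [← Rm_mul, ← Rm_mul, ← Rm_add, add_comm, im_mul_prime_add_prime_mul, Rm_algebraMap]
  · rw [← Lm_mul, ← Lm_mul, ← Lm_add, im_mul_prime_add_prime_mul, Lm_algebraMap]

theorem mp_inverse_Rm_sub_Lm_general (a b : SplitQuaternion) (ha : a.im ≠ 0)
    (hre : a.re = b.re) (hK : -a.imI ^ 2 + a.imJ ^ 2 + a.imK ^ 2 =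
      -b.imI ^ 2 + b.imJ ^ 2 + b.imK ^ 2)
    (T S : Matrix (Fin 4) (Fin 4) ℝ) (c : ℝ)
    (hT : T = Rm a - Lm b) (hS : S = Rm (prime a) - Lm (prime b))
    (hc : c = 2 * (normIm a + normIm b)) :
    0 < c ∧ T * S * T = c • T ∧ S * T * S = c • S ∧
      (T * S)ᵀ = T * S ∧ (S * T)ᵀ = S * T := by
  have hST : S = Tᵀ := by rw [hS, hT, transpose_sub, transpose_Rm, transpose_Lm]
  have hTST : T * S * T = c • T := by
    rw [hST, hT, hc]
    exact Rm_sub_Lm_mul_transpose_mul_self hre hK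
  subst hST
  refine ⟨?_, hTST, ?_, ?_, ?_⟩
  · linarith [normIm_pos ha, normIm_nonneg b]
  · simpa only [transpose_mul, transpose_transpose, transpose_smul, mul_assoc]
      using congrArg transpose hTST
  · rw [transpose_mul, transpose_transpose]
  · rw [transpose_mul, transpose_transpose]

/-- For non-real `a, b ∈ ℍₛ` with `a₀ = b₀` and `K(a) = K(b)`, putting
`T = R(a) − L(b)`, `S = R(a') − L(b')` and `c = 2(|Im a|² + |Im b|²) > 0`, one has
`TST = c·T`, `STS = c·S`, and `TS`, `ST` are symmetric; i.e.
`T⁺ = (R(a') − L(b')) / (2(|Im a|² + |Im b|²))`. -/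
theorem mp_inverse_Rm_sub_Lm (a b : SplitQuaternion) (ha : a.im ≠ 0) (hb : b.im ≠ 0)
    (hre : a.re = b.re) (hK : -a.imI ^ 2 + a.imJ ^ 2 + a.imK ^ 2 =
      -b.imI ^ 2 + b.imJ ^ 2 + b.imK ^ 2)
    (T S : Matrix (Fin 4) (Fin 4) ℝ) (c : ℝ)
    (hT : T = Rm a - Lm b) (hS : S = Rm (prime a) - Lm (prime b))
    (hc : c = 2 * (normIm a + normIm b)) :
    0 < c ∧ T * S * T = c • T ∧ S * T * S = c • S ∧
      (T * S)ᵀ = T * S ∧ (S * T)ᵀ = S * T :=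
  mp_inverse_Rm_sub_Lm_general a b ha hre hK T S c hT hS hc
end
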